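/- Let 0 < q < 1, n ∈ ℕ, and u > 0 a real number, and set x_n = (q^{−n/2}u − q^{n/2}u^{−1})/2. Then ((q;q)_n · w_IM(x_n|q) / (q^{n/2} · w_IM((u − u^{−1})/2 | q))) · h̃_n(x_n|q)² ≤ A_q(−u^{−2})². Equivalently, q^{n²} u^{−2n} h_n(x_n|q)² ≤ A_q(−u^{−2})². -/
import Mathlib


/-- The finite q-Pochhammer symbol `(a;q)_n = ∏_{j=0}^{n-1} (1 - a q^j)` in `ℝ`. -/
noncomputable def qPochR (q a : ℝ) (n : ℕ) : ℝ :=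
  ∏ j ∈ Finset.range n, (1 - a * q ^ j)

/-- The q-binomial coefficient `[n; k]_q = (q;q)_n / ((q;q)_k (q;q)_{n−k})` in `ℝ`. -/
noncomputable def qBinomR (q : ℝ) (n k : ℕ) : ℝ :=
  qPochR q q n / (qPochR q q k * qPochR q q (n - k))

/-- The Ismail–Masson polynomial `h_n` evaluated at `(w − w⁻¹)/2`:
`h_n((w − w⁻¹)/2 | q) = Σ_{k=0}^n [n;k]_q q^{k(k−n)} (−1)^k w^{n−2k}`. -/
noncomputable def hIM (q : ℝ) (n : ℕ) (w : ℝ) : ℝ :=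
  ∑ k ∈ Finset.range (n + 1),
    qBinomR q n k * q ^ ((k : ℤ) * ((k : ℤ) - (n : ℤ))) * (-1) ^ k * w ^ ((n : ℤ) - 2 * (k : ℤ))

/-- The Ismail–Masson weight
`w_IM(x|q) = √(−2 q^{1/4}/(π log q)) · exp{(2/log q)(log(x+√(x²+1)))²}`. -/
noncomputable def wIM (q x : ℝ) : ℝ :=
  Real.sqrt (-2 * q ^ ((1 : ℝ) / 4) / (Real.pi * Real.log q)) *
    Real.exp (2 / Real.log q * Real.log (x + Real.sqrt (x ^ 2 + 1)) ^ 2)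

/-- The Ramanujan function restricted to real arguments:
`A_q(x) = Σ_{k=0}^∞ q^{k²} (−x)^k / (q;q)_k`. -/
noncomputable def ramanujanAqR (q x : ℝ) : ℝ :=
  ∑' k : ℕ, q ^ (k ^ 2) * (-x) ^ k / qPochR q q k

section Aux

variable {q : ℝ}

lemma qPochR_succ' (n : ℕ) : qPochR q q (n+1) = qPochR q q n * (1 - q * q ^ n) := by
  simp [qPochR, Finset.prod_range_succ]

lemma qPochR_pos' (hq0 : 0 < q) (hq1 : q < 1) (n : ℕ) : 0 < qPochR q q n := by
  refine Finset.prod_pos fun j _ => ?_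
  have h1 : q * q ^ j ≤ q := by
    nlinarith [pow_le_one₀ hq0.le hq1.le (n := j), pow_pos hq0 j]
  linarith

lemma qPochR_le_one' (hq0 : 0 < q) (hq1 : q < 1) (n : ℕ) : qPochR q q n ≤ 1 := by
  refine Finset.prod_le_one (fun j _ => ?_) (fun j _ => ?_)
  · have h1 : q * q ^ j ≤ q := by
      nlinarith [pow_le_one₀ hq0.le hq1.le (n := j), pow_pos hq0 j]
    linarith
  · nlinarith [pow_pos hq0 j]

lemma qPochR_anti' (hq0 : 0 < q) (hq1 : q < 1) {m n : ℕ} (h : m ≤ n) :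
    qPochR q q n ≤ qPochR q q m := by
  induction n with
  | zero => simp [Nat.le_zero.mp h]
  | succ n ih =>
    rcases Nat.lt_or_ge m (n+1) with h' | h'
    · have hn := ih (Nat.lt_succ_iff.mp h')
      rw [qPochR_succ']
      have hpos := qPochR_pos' hq0 hq1 n
      have h1 : q * q ^ n ≤ q := by
        nlinarith [pow_le_one₀ hq0.le hq1.le (n := n), pow_pos hq0 n]
      nlinarith [mul_nonneg hpos.le (mul_pos hq0 (pow_pos hq0 n)).le]
    · have : m = n+1 := le_antisymm h h'
      simp [this]

lemma qBinomR_nonneg' (hq0 : 0 < q) (hq1 : q < 1) (n k : ℕ) : 0 ≤ qBinomR q n k :=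
  le_of_lt (div_pos (qPochR_pos' hq0 hq1 n)
    (mul_pos (qPochR_pos' hq0 hq1 k) (qPochR_pos' hq0 hq1 (n-k))))

lemma qBinomR_le' (hq0 : 0 < q) (hq1 : q < 1) (n k : ℕ) :
    qBinomR q n k ≤ 1 / qPochR q q k := by
  have hk := qPochR_pos' hq0 hq1 k
  have hnk := qPochR_pos' hq0 hq1 (n-k)
  have hle : qPochR q q n ≤ qPochR q q (n-k) := qPochR_anti' hq0 hq1 (Nat.sub_le n k)
  rw [qBinomR, div_le_div_iff₀ (by positivity) hk]
  nlinarith [mul_le_mul_of_nonneg_right hle hk.le, qPochR_le_one' hq0 hq1 k]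

lemma summable_aux' (hq0 : 0 < q) (hq1 : q < 1) {r : ℝ} (hr : 0 ≤ r) :
    Summable (fun k : ℕ => q ^ (k ^ 2) * r ^ k / qPochR q q k) := by
  apply summable_of_ratio_norm_eventually_le (r := 1/2) (by norm_num)
  have h0 : Filter.Tendsto (fun k : ℕ => q ^ k * r) Filter.atTop (nhds 0) := by
    simpa using (tendsto_pow_atTop_nhds_zero_of_lt_one hq0.le hq1).mul_const r
  have hev : ∀ᶠ k : ℕ in Filter.atTop, q ^ k * r ≤ (1 - q)/2 :=
    h0.eventually (eventually_le_nhds (by linarith))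
  filter_upwards [hev] with k hk
  have hP := qPochR_pos' hq0 hq1 k
  have hP1 := qPochR_pos' hq0 hq1 (k+1)
  rw [Real.norm_eq_abs, Real.norm_eq_abs,
    abs_of_nonneg (by positivity), abs_of_nonneg (by positivity)]
  have e1 : q ^ ((k+1)^2) = q ^ (k^2) * (q ^ k)^2 * q := by
    rw [show (k+1)^2 = k^2 + (2*k + 1) by ring, pow_add, pow_add, pow_mul']; ring
  rw [e1, show r^(k+1) = r^k * r from pow_succ r k, qPochR_succ']
  have hc1 : q ^ k ≤ 1 := pow_le_one₀ hq0.le hq1.le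
  have hc0 : 0 < q ^ k := pow_pos hq0 k
  have h4 : q * q ^ k ≤ q := by nlinarith
  have hkey : (q ^ k)^2 * q * r ≤ (1 - q * q ^ k)/2 := by
    nlinarith [mul_le_mul_of_nonneg_left hk (by positivity : (0:ℝ) ≤ q ^ k * q),
      sq_nonneg (1 - q)]
  have h2 : (0:ℝ) < 1 - q * q ^ k := by nlinarith
  have main : (q ^ (k^2) * (q ^ k)^2 * q * (r ^ k * r)) / (qPochR q q k * (1 - q * q ^ k))
      ≤ (1/2 * (q ^ (k^2) * r ^ k)) / qPochR q q k := by
    rw [div_le_div_iff₀ (by positivity) hP]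
    have hab : (0:ℝ) ≤ q ^ (k^2) * r ^ k * qPochR q q k := by positivity
    nlinarith [mul_le_mul_of_nonneg_left hkey hab]
  refine le_trans (le_of_eq (by ring)) (le_trans main (le_of_eq (by ring)))

lemma term_eq' (hq0 : 0 < q) (n k : ℕ) (u : ℝ) (hu : 0 < u) :
    q ^ ((n^2 : ℝ)/2) * u ^ (-(n:ℤ)) *
      (q ^ ((k:ℤ) * ((k:ℤ) - (n:ℤ))) * ((q ^ (-(n:ℝ)/2) * u) ^ ((n:ℤ) - 2*(k:ℤ))))
      = q ^ (k^2) * ((u^2)⁻¹) ^ k := by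
  have hw : (0:ℝ) < q ^ (-(n:ℝ)/2) := Real.rpow_pos_of_pos hq0 _
  rw [mul_zpow]
  have hq' : (q ^ (-(n:ℝ)/2) : ℝ) ^ ((n:ℤ) - 2*(k:ℤ)) = q ^ ((-(n:ℝ)/2) * (((n:ℤ) - 2*(k:ℤ) : ℤ) : ℝ)) := by
    rw [Real.rpow_mul hq0.le, Real.rpow_intCast]
  have hu' : u ^ (-(n:ℤ)) * u ^ ((n:ℤ) - 2*(k:ℤ)) = ((u^2)⁻¹) ^ k := by
    rw [← zpow_add₀ hu.ne', show (-(n:ℤ) + ((n:ℤ) - 2*(k:ℤ))) = (-2) * (k:ℤ) by ring,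
      zpow_mul, show ((-2:ℤ)) = -(2:ℤ) by ring, zpow_neg, zpow_two, ← sq, zpow_natCast]
  have hz : (q : ℝ) ^ ((k:ℤ) * ((k:ℤ) - (n:ℤ))) = q ^ ((((k:ℤ) * ((k:ℤ) - (n:ℤ)) : ℤ)) : ℝ) := by
    rw [Real.rpow_intCast]
  calc q ^ ((n^2 : ℝ)/2) * u ^ (-(n:ℤ)) *
      (q ^ ((k:ℤ) * ((k:ℤ) - (n:ℤ))) * ((q ^ (-(n:ℝ)/2)) ^ ((n:ℤ) - 2*(k:ℤ)) * u ^ ((n:ℤ) - 2*(k:ℤ))))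
      = (q ^ ((n^2 : ℝ)/2) * q ^ ((((k:ℤ) * ((k:ℤ) - (n:ℤ)) : ℤ)) : ℝ) * q ^ ((-(n:ℝ)/2) * (((n:ℤ) - 2*(k:ℤ) : ℤ) : ℝ))) * (u ^ (-(n:ℤ)) * u ^ ((n:ℤ) - 2*(k:ℤ))) := by
        rw [hq', hz]; ring
    _ = q ^ ((k^2 : ℕ) : ℝ) * ((u^2)⁻¹) ^ k := by
        rw [hu', ← Real.rpow_add hq0, ← Real.rpow_add hq0]
        congr 2
        push_cast
        ring
    _ = q ^ (k^2) * ((u^2)⁻¹) ^ k := by rw [Real.rpow_natCast]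

lemma wIM_eq' (w : ℝ) (hw : 0 < w) :
    wIM q ((w - w⁻¹) / 2) =
      Real.sqrt (-2 * q ^ ((1 : ℝ) / 4) / (Real.pi * Real.log q)) *
        Real.exp (2 / Real.log q * Real.log w ^ 2) := by
  have hsq : ((w - w⁻¹) / 2) ^ 2 + 1 = ((w + w⁻¹) / 2) ^ 2 := by
    field_simp; ring
  have hiv : 0 < w⁻¹ := inv_pos.mpr hw
  rw [wIM, hsq, Real.sqrt_sq (by positivity),
    show (w - w⁻¹) / 2 + (w + w⁻¹) / 2 = w by ring]

end Aux

/-- For `0 < q < 1`, `n ∈ ℕ` and real `u > 0`, with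
`x_n = (q^{−n/2}u − q^{n/2}u^{−1})/2` (so `h_n(x_n|q) = hIM q n (q^{−n/2}u)` and
`h̃_n = q^{n(n+1)/4}(q;q)_n^{−1/2} h_n`):
`((q;q)_n w_IM(x_n|q)/(q^{n/2} w_IM((u−u⁻¹)/2|q))) h̃_n(x_n|q)² ≤ A_q(−u^{−2})²`,
equivalently `q^{n²} u^{−2n} h_n(x_n|q)² ≤ A_q(−u^{−2})²`. -/
theorem ismailMasson_weighted_sq_le (q : ℝ) (hq0 : 0 < q) (hq1 : q < 1)
    (n : ℕ) (u : ℝ) (hu : 0 < u) :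
    (qPochR q q n * wIM q ((q ^ (-(n : ℝ) / 2) * u - q ^ ((n : ℝ) / 2) * u⁻¹) / 2) /
          (q ^ ((n : ℝ) / 2) * wIM q ((u - u⁻¹) / 2))) *
        (q ^ ((n : ℝ) * ((n : ℝ) + 1) / 4) / Real.sqrt (qPochR q q n) *
          hIM q n (q ^ (-(n : ℝ) / 2) * u)) ^ 2 ≤
      ramanujanAqR q (-(u ^ 2)⁻¹) ^ 2 ∧
    q ^ (n ^ 2) * u ^ (-(2 * (n : ℤ))) * hIM q n (q ^ (-(n : ℝ) / 2) * u) ^ 2 ≤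
      ramanujanAqR q (-(u ^ 2)⁻¹) ^ 2 := by
  have hL : Real.log q < 0 := Real.log_neg hq0 hq1
  have hP := qPochR_pos' hq0 hq1 n
  set w : ℝ := q ^ (-(n : ℝ) / 2) * u with hwdef
  have hw : 0 < w := mul_pos (Real.rpow_pos_of_pos hq0 _) hu
  have hr : (0:ℝ) ≤ (u^2)⁻¹ := by positivity
  -- the rewritten partial sum
  set S : ℝ := ∑ k ∈ Finset.range (n + 1),
      qBinomR q n k * q ^ (k^2) * (-1) ^ k * ((u^2)⁻¹) ^ k with hSdef
  have hS : q ^ ((n^2 : ℝ)/2) * u ^ (-(n:ℤ)) * hIM q n w = S := by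
    rw [hIM, Finset.mul_sum, hSdef]
    refine Finset.sum_congr rfl fun k _ => ?_
    have h := term_eq' hq0 n k u hu
    calc q ^ ((n^2 : ℝ)/2) * u ^ (-(n:ℤ)) *
          (qBinomR q n k * q ^ ((k:ℤ) * ((k:ℤ) - (n:ℤ))) * (-1) ^ k * w ^ ((n:ℤ) - 2*(k:ℤ)))
        = (qBinomR q n k * (-1)^k) * (q ^ ((n^2 : ℝ)/2) * u ^ (-(n:ℤ)) *
            (q ^ ((k:ℤ) * ((k:ℤ) - (n:ℤ))) * ((q ^ (-(n:ℝ)/2) * u) ^ ((n:ℤ) - 2*(k:ℤ))))) := by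
          rw [← hwdef]; ring
      _ = qBinomR q n k * q ^ (k^2) * (-1) ^ k * ((u^2)⁻¹) ^ k := by rw [h]; ring
  -- Ramanujan function as a positive-term series
  have hA : ramanujanAqR q (-(u ^ 2)⁻¹) = ∑' k : ℕ, q ^ (k^2) * ((u^2)⁻¹) ^ k / qPochR q q k := by
    simp [ramanujanAqR]
  have hsum := summable_aux' hq0 hq1 hr
  have hA0 : 0 ≤ ramanujanAqR q (-(u ^ 2)⁻¹) := by
    rw [hA]
    exact tsum_nonneg fun k => div_nonneg (by positivity) (qPochR_pos' hq0 hq1 k).le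
  -- |S| ≤ A
  have habs : |S| ≤ ramanujanAqR q (-(u ^ 2)⁻¹) := by
    rw [hA, hSdef]
    calc |∑ k ∈ Finset.range (n + 1), qBinomR q n k * q ^ (k^2) * (-1) ^ k * ((u^2)⁻¹) ^ k|
        ≤ ∑ k ∈ Finset.range (n + 1), |qBinomR q n k * q ^ (k^2) * (-1) ^ k * ((u^2)⁻¹) ^ k| :=
          Finset.abs_sum_le_sum_abs _ _
      _ ≤ ∑ k ∈ Finset.range (n + 1), q ^ (k^2) * ((u^2)⁻¹) ^ k / qPochR q q k := by
          refine Finset.sum_le_sum fun k _ => ?_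
          have hB := qBinomR_nonneg' hq0 hq1 n k
          have hBle := qBinomR_le' hq0 hq1 n k
          have hPk := qPochR_pos' hq0 hq1 k
          have habs1 : |qBinomR q n k * q ^ (k^2) * (-1) ^ k * ((u^2)⁻¹) ^ k|
              = qBinomR q n k * q ^ (k^2) * ((u^2)⁻¹) ^ k := by
            rw [abs_mul, abs_mul, abs_mul, abs_pow, abs_pow, abs_pow, abs_neg, abs_one,
              one_pow, mul_one, abs_of_nonneg hB, abs_of_nonneg hq0.le, abs_of_nonneg hr]
          rw [habs1]
          calc qBinomR q n k * q ^ (k^2) * ((u^2)⁻¹) ^ k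
              ≤ (1 / qPochR q q k) * q ^ (k^2) * ((u^2)⁻¹) ^ k := by
                apply mul_le_mul_of_nonneg_right _ (by positivity)
                exact mul_le_mul_of_nonneg_right hBle (by positivity)
            _ = q ^ (k^2) * ((u^2)⁻¹) ^ k / qPochR q q k := by ring
      _ ≤ ∑' k : ℕ, q ^ (k^2) * ((u^2)⁻¹) ^ k / qPochR q q k :=
          Summable.sum_le_tsum _ (fun k _ => div_nonneg (by positivity) (qPochR_pos' hq0 hq1 k).le) hsum
  -- squared inequality
  have hSsq : S ^ 2 ≤ ramanujanAqR q (-(u ^ 2)⁻¹) ^ 2 := by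
    obtain ⟨h1, h2⟩ := abs_le.mp habs
    exact sq_le_sq' h1 h2
  -- second inequality
  have key2 : q ^ (n ^ 2) * u ^ (-(2 * (n : ℤ))) * hIM q n w ^ 2 ≤
      ramanujanAqR q (-(u ^ 2)⁻¹) ^ 2 := by
    have hL2 : q ^ (n ^ 2) * u ^ (-(2 * (n : ℤ))) * hIM q n w ^ 2
        = (q ^ ((n^2 : ℝ)/2) * u ^ (-(n:ℤ)) * hIM q n w) ^ 2 := by
      have e1 : (q ^ ((n^2 : ℝ)/2)) ^ 2 = q ^ (n ^ 2) := by
        rw [← Real.rpow_natCast (q ^ ((n^2 : ℝ)/2)) 2, ← Real.rpow_mul hq0.le,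
          show ((n^2 : ℝ)/2) * ((2:ℕ):ℝ) = ((n^2 : ℕ) : ℝ) by push_cast; ring,
          Real.rpow_natCast]
      have e2 : (u ^ (-(n:ℤ))) ^ 2 = u ^ (-(2 * (n : ℤ))) := by
        rw [← zpow_natCast (u ^ (-(n:ℤ))) 2, ← zpow_mul,
          show (-(n:ℤ)) * ((2:ℕ):ℤ) = -(2 * (n:ℤ)) by ring]
      rw [mul_pow, mul_pow, e1, e2]
    rw [hL2, hS]
    exact hSsq
  refine ⟨?_, key2⟩
  -- first expression equals the second one
  have hwinv : q ^ ((n : ℝ) / 2) * u⁻¹ = w⁻¹ := by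
    rw [hwdef, mul_inv, ← Real.rpow_neg hq0.le]
    congr 2
    ring
  have hEq : (qPochR q q n * wIM q ((q ^ (-(n : ℝ) / 2) * u - q ^ ((n : ℝ) / 2) * u⁻¹) / 2) /
          (q ^ ((n : ℝ) / 2) * wIM q ((u - u⁻¹) / 2))) *
        (q ^ ((n : ℝ) * ((n : ℝ) + 1) / 4) / Real.sqrt (qPochR q q n) * hIM q n w) ^ 2
      = q ^ (n ^ 2) * u ^ (-(2 * (n : ℤ))) * hIM q n w ^ 2 := by
    rw [hwinv, ← hwdef, wIM_eq' w hw, wIM_eq' u hu]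
    set L : ℝ := Real.log q with hLdef
    set b : ℝ := Real.log u with hbdef
    set C : ℝ := Real.sqrt (-2 * q ^ ((1 : ℝ) / 4) / (Real.pi * L)) with hCdef
    have hC : 0 < C := by
      apply Real.sqrt_pos.mpr
      apply div_pos_of_neg_of_neg
      · have := Real.rpow_pos_of_pos hq0 ((1:ℝ)/4); linarith
      · exact mul_neg_of_pos_of_neg Real.pi_pos hL
    have hlogw : Real.log w = -(n:ℝ)/2 * L + b := by
      rw [hwdef, Real.log_mul (Real.rpow_pos_of_pos hq0 _).ne' hu.ne', Real.log_rpow hq0]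
    have hQ : q ^ ((n:ℝ)/2) = Real.exp (L * ((n:ℝ)/2)) := Real.rpow_def_of_pos hq0 _
    have hRR : q ^ ((n : ℝ) * ((n : ℝ) + 1) / 4) = Real.exp (L * ((n : ℝ) * ((n : ℝ) + 1) / 4)) :=
      Real.rpow_def_of_pos hq0 _
    have hqn : (q:ℝ) ^ (n^2 : ℕ) = Real.exp (L * ((n^2 : ℕ) : ℝ)) := by
      rw [← Real.rpow_natCast q (n^2), Real.rpow_def_of_pos hq0]
    have hun : u ^ (-(2 * (n : ℤ))) = Real.exp (b * ((-(2 * (n : ℤ)) : ℤ) : ℝ)) := by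
      rw [← Real.rpow_intCast u, Real.rpow_def_of_pos hu]
    rw [hlogw, hQ, hRR, hqn, hun]
    have hsq : (Real.exp (L * ((n : ℝ) * ((n : ℝ) + 1) / 4)) / Real.sqrt (qPochR q q n) *
          hIM q n w) ^ 2
        = Real.exp (L * ((n : ℝ) * ((n : ℝ) + 1) / 4)) ^ 2 / qPochR q q n * hIM q n w ^ 2 := by
      rw [mul_pow, div_pow, Real.sq_sqrt hP.le]
    rw [hsq]
    have hexp2 : Real.exp (L * ((n : ℝ) * ((n : ℝ) + 1) / 4)) ^ 2
        = Real.exp (L * ((n : ℝ) * ((n : ℝ) + 1) / 2)) := by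
      rw [sq, ← Real.exp_add]; ring_nf
    rw [hexp2]
    have hexpo : 2 / L * (-(n:ℝ)/2 * L + b) ^ 2 + L * ((n : ℝ) * ((n : ℝ) + 1) / 2)
        - (L * ((n:ℝ)/2) + 2 / L * b ^ 2)
        = L * ((n^2 : ℕ) : ℝ) + b * ((-(2 * (n : ℤ)) : ℤ) : ℝ) := by
      have hLne : L ≠ 0 := ne_of_lt hL
      push_cast
      field_simp
      ring
    calc qPochR q q n * (C * Real.exp (2 / L * (-(n:ℝ)/2 * L + b) ^ 2)) /
          (Real.exp (L * ((n:ℝ)/2)) * (C * Real.exp (2 / L * b ^ 2))) *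
          (Real.exp (L * ((n : ℝ) * ((n : ℝ) + 1) / 2)) / qPochR q q n * hIM q n w ^ 2)
        = Real.exp (2 / L * (-(n:ℝ)/2 * L + b) ^ 2) * Real.exp (L * ((n : ℝ) * ((n : ℝ) + 1) / 2)) /
            (Real.exp (L * ((n:ℝ)/2)) * Real.exp (2 / L * b ^ 2)) * hIM q n w ^ 2 := by
          field_simp
      _ = Real.exp (2 / L * (-(n:ℝ)/2 * L + b) ^ 2 + L * ((n : ℝ) * ((n : ℝ) + 1) / 2)
            - (L * ((n:ℝ)/2) + 2 / L * b ^ 2)) * hIM q n w ^ 2 := by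
          rw [Real.exp_sub, Real.exp_add, Real.exp_add]
      _ = Real.exp (L * ((n^2 : ℕ) : ℝ) + b * ((-(2 * (n : ℤ)) : ℤ) : ℝ)) * hIM q n w ^ 2 := by
          rw [hexpo]
      _ = Real.exp (L * ((n^2 : ℕ) : ℝ)) * Real.exp (b * ((-(2 * (n : ℤ)) : ℤ) : ℝ)) *
            hIM q n w ^ 2 := by rw [Real.exp_add]
  rw [hEq]
  exact key2
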